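/- arXiv:1606.07216 — 5 statements merged into one kernel-verified Lean document; each statement's English description precedes it below -/
import Mathlib

section
/- Let $A$ be a ring with a Frobenius-like ring endomorphism $\varphi$, let $F$ be a field containing $A$ to which $\varphi$ extends, and suppose $Y \in M_d(F)$, $B, C \in M_d(A)$ satisfy $\varphi(Y) = YB + C$, where $A$ is a valuation ring of $F$ and $\varphi$ multiplies valuations by $p > 1$ (i.e., $v(\varphi(x)) = p\, v(x)$ for all $x \in F$). Then $Y \in M_d(A)$. -/
/-!
Take an entry `y` of `Y` of minimal valuation `m`, and suppose `m < 0`. Since `B` and `C` are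
integral, the corresponding entry of `Y * B + C` has valuation at least `m`; but it equals `φ y`,
of valuation `p • m < m`.
-/

theorem WithTop.nonneg_of_le_nsmul {a : WithTop ℤ} {p : ℕ} (hp : 1 < p) (h : a ≤ p • a) :
    0 ≤ a := by
  induction a with
  | top => exact le_top
  | coe n =>
    have hn : n ≤ p * n := by exact_mod_cast h
    exact_mod_cast (by nlinarith : 0 ≤ n)

theorem AddValuation.le_map_mul_add_apply {R Γ : Type*} [Ring R]
    [LinearOrderedAddCommMonoidWithTop Γ] (v : AddValuation R Γ) {l m n : Type*} [Fintype m]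
    {Y : Matrix l m R} {B : Matrix m n R} {C : Matrix l n R} {i : l} {j : n} {γ : Γ}
    (hγ : γ ≤ 0) (hY : ∀ k, γ ≤ v (Y i k)) (hB : ∀ k, 0 ≤ v (B k j)) (hC : 0 ≤ v (C i j)) :
    γ ≤ v ((Y * B + C) i j) := by
  refine v.map_le_add (v.map_le_sum fun k _ => ?_) (hγ.trans hC)
  rw [v.map_mul]
  simpa using add_le_add (hY k) (hB k)

/-- Lemma 6.4: if a matrix `Y` over a valued field `F` satisfies the twisted
equation `φ(Y) = Y*B + C` with `B`, `C` integral (entries of nonnegative valuation),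
and `φ` multiplies (additive) valuations by `p > 1`, then `Y` is integral. -/
theorem stmt_0 {F : Type*} [Field F] (p : ℕ) (hp : 1 < p)
    (v : AddValuation F (WithTop ℤ)) (φ : F →+* F)
    (hφ : ∀ x : F, v (φ x) = p • v x)
    {d : ℕ} (Y B C : Matrix (Fin d) (Fin d) F)
    (hB : ∀ i j, 0 ≤ v (B i j)) (hC : ∀ i j, 0 ≤ v (C i j))
    (heq : Y.map φ = Y * B + C) :
    ∀ i j, 0 ≤ v (Y i j) := by
  by_contra! ⟨i₀, j₀, hneg⟩
  obtain ⟨⟨i, j⟩, -, hmin⟩ := Finset.univ.exists_min_image (fun q => v (Y q.1 q.2))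
    ⟨(i₀, j₀), Finset.mem_univ _⟩
  have hm : v (Y i j) < 0 := (hmin (i₀, j₀) (Finset.mem_univ _)).trans_lt hneg
  have hle : v (Y i j) ≤ p • v (Y i j) := by
    rw [← hφ, ← Matrix.map_apply (f := φ), heq]
    exact v.le_map_mul_add_apply hm.le (fun k => hmin (i, k) (Finset.mem_univ _))
      (fun k => hB k j) (hC i j)
  exact hm.not_ge (WithTop.nonneg_of_le_nsmul hp hle)
end

section
/- Let $k$ be a field and $\mathfrak{S}_1 = k[[u]]$. Let $\mathfrak{M}$ be a $p^n$-torsion module over $\mathfrak{S} = W(k)[[u]]$ such that each quotient $\mathfrak{M}^{i-1,i} := p^{i-1}\mathfrak{M} \cap \mathfrak{M}[p]$ is a finite free $k[[u]]$-module of rank $d$. Choose elements $\mathfrak{e}^{(i)}_1, \dots, \mathfrak{e}^{(i)}_d \in \mathfrak{M}$ such that $p^{i-1}\mathfrak{e}^{(i)}_1, \dots, p^{i-1}\mathfrak{e}^{(i)}_d$ form a $k[[u]]$-basis of $\mathfrak{M}^{i-1,i}$ for each $1 \leq i \leq n$. Then for each $1 \leq m \leq n$, the submodule $\mathfrak{M}[p^m]$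 of $p^m$-torsion elements is generated over $\mathfrak{S}$ by $\{\mathfrak{e}^{(i)}_j : 1 \leq i \leq m,\ 1 \leq j \leq d\}$. In particular, $\mathfrak{M} = \mathfrak{M}[p^n]$ is generated by all the $\mathfrak{e}^{(i)}_j$. -/
/-!
Induction on `m`. If `a ^ (m + 1) • x = 0`, then `a ^ m • x` is `a`-torsion and divisible by
`a ^ m`, hence equals `a ^ m • y` for some `y` in the span of the `e (m + 1) j`; then `x - y` is
killed by `a ^ m` and lies in the span of the `e i j` with `i ≤ m`.
-/

open Submodule Set

section

variable {A M ι : Type*} [CommRing A] [AddCommGroup M] [Module A M]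

theorem exists_mem_span_smul_sub_eq_zero_of_smul_mem_span {a : A} {v : ι → M} {x : M}
    (hx : a • x ∈ span A (range fun j => a • v j)) :
    ∃ y ∈ span A (range v), a • (x - y) = 0 := by
  have hrange : (range fun j => a • v j) = (a • LinearMap.id : M →ₗ[A] M) '' range v := by
    rw [← range_comp]; rfl
  rw [hrange, span_image, mem_map] at hx
  obtain ⟨y, hy, hxy⟩ := hx
  exact ⟨y, hy, by rw [smul_sub, ← hxy, LinearMap.smul_apply, LinearMap.id_apply, sub_self]⟩

theorem mem_span_of_pow_smul_eq_zero (a : A) (e : ℕ → ι → M) (m : ℕ)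
    (hspan : ∀ i, 1 ≤ i → i ≤ m → ∀ x : M, a • x = 0 → (∃ y : M, x = a ^ (i - 1) • y) →
      x ∈ span A (range fun j => a ^ (i - 1) • e i j)) :
    ∀ x : M, a ^ m • x = 0 → x ∈ span A {y : M | ∃ i j, 1 ≤ i ∧ i ≤ m ∧ y = e i j} := by
  induction m with
  | zero =>
    intro x hx
    rw [pow_zero, one_smul] at hx
    exact hx ▸ zero_mem _
  | succ m ih =>
    intro x hx
    have htop : a ^ m • x ∈ span A (range fun j => a ^ m • e (m + 1) j) :=
      hspan (m + 1) le_add_self le_rfl _ (by rw [smul_smul, ← pow_succ', hx]) ⟨x, rfl⟩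
    obtain ⟨y, hy, hxy⟩ := exists_mem_span_smul_sub_eq_zero_of_smul_mem_span htop
    have hlower : x - y ∈ span A {y : M | ∃ i j, 1 ≤ i ∧ i ≤ m + 1 ∧ y = e i j} := by
      refine span_mono ?_ (ih (fun i hi him => hspan i hi (him.trans m.le_succ)) _ hxy)
      rintro _ ⟨i, j, hi, him, rfl⟩
      exact ⟨i, j, hi, him.trans m.le_succ, rfl⟩
    have htopgen : y ∈ span A {y : M | ∃ i j, 1 ≤ i ∧ i ≤ m + 1 ∧ y = e i j} := by
      refine span_mono ?_ hy
      rintro _ ⟨j, rfl⟩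
      exact ⟨m + 1, j, le_add_self, le_rfl, rfl⟩
    exact sub_add_cancel x y ▸ add_mem hlower htopgen

end

theorem stmt_5_general {A M : Type*} [CommRing A] [AddCommGroup M] [Module A M]
    (p : ℕ) (n d : ℕ)
    (e : ℕ → Fin d → M)
    (hspan : ∀ i, 1 ≤ i → i ≤ n → ∀ x : M, (p : A) • x = 0 →
      (∃ y : M, x = ((p : A)) ^ (i - 1) • y) →
      x ∈ Submodule.span A (Set.range fun j => ((p : A)) ^ (i - 1) • e i j)) :
    ∀ m, 1 ≤ m → m ≤ n → ∀ x : M, ((p : A)) ^ m • x = 0 →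
      x ∈ Submodule.span A {y : M | ∃ i j, 1 ≤ i ∧ i ≤ m ∧ y = e i j} :=
  fun m _ hmn => mem_span_of_pow_smul_eq_zero (p : A) e m
    fun i hi him => hspan i hi (him.trans hmn)

/-- Lemma 5.2: if `𝔐` is killed by `p^n` and for each `1 ≤ i ≤ n` the elements
`p^(i-1) • e i j` span the submodule `𝔐^{i-1,i} = p^(i-1)𝔐 ∩ 𝔐[p]`, then for each
`1 ≤ m ≤ n` the `p^m`-torsion submodule `𝔐[p^m]` is generated by the `e i j` with
`i ≤ m`. -/
theorem stmt_5 {A M : Type*} [CommRing A] [AddCommGroup M] [Module A M]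
    (p : ℕ) (hp : p.Prime) (n d : ℕ)
    (hkill : ∀ x : M, ((p : A)) ^ n • x = 0)
    (e : ℕ → Fin d → M)
    (htor : ∀ i, 1 ≤ i → i ≤ n → ∀ j, ((p : A)) ^ i • e i j = 0)
    (hspan : ∀ i, 1 ≤ i → i ≤ n → ∀ x : M, (p : A) • x = 0 →
      (∃ y : M, x = ((p : A)) ^ (i - 1) • y) →
      x ∈ Submodule.span A (Set.range fun j => ((p : A)) ^ (i - 1) • e i j)) :
    ∀ m, 1 ≤ m → m ≤ n → ∀ x : M, ((p : A)) ^ m • x = 0 →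
      x ∈ Submodule.span A {y : M | ∃ i j, 1 ≤ i ∧ i ≤ m ∧ y = e i j} :=
  stmt_5_general p n d e hspan
end

section
/- Let $R$ be a valuation ring (with value group $\mathbb{Z}$ or $\mathbb{R}$), let $B$ be a subring of $W(R)$ (the ring of Witt vectors, or more generally a $p$-adically separated ring with $p^m B' \cap B = p^m B$ for the ambient ring $B'$), and fix $\alpha > 0$ and an element $u \in B$. Suppose $(y_n)_{n \geq 1}$ is a sequence with $y_n = x_n / u^{\alpha(n-1)}$ where $x_n \in B$, such that $y_{n+1} \equiv y_n \pmod{p^n}$ for all $n$. Then each $y_n$ lies in $(B/p^n B)[p/u^{\alpha}]$, and hence the limit $y = \lim_n y_n$ lies in the ring $B[[p/u^{\alpha}]]$ of power series $\sum_{m \geq 0} b_m (p/u^{\alpha})^m$ with $b_m \in B$. -/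
/-!
Multiplying `y (n+1) - y n` by `u ^ (α n)` gives `x (n+1) - u ^ α x n`, an element of `B` divisible
by `p ^ n` in `B'`, hence (by `p^n B' ∩ B = p^n B`) equal to `p ^ n b n` with `b n ∈ B`. So each
increment is `b n (p / u ^ α) ^ n`, and `y n` is exactly the partial sum of `∑ b m (p / u ^ α) ^ m`.
-/

namespace Subring

variable {B' : Type*} [CommRing B'] {B : Subring B'} {π u v : B'}

theorem exists_sub_eq_mul_pow_mul_pow
    (hcap : ∀ (m : ℕ) (x : B'), x ∈ B → π ^ m ∣ x → ∃ b : B, x = π ^ m * (b : B'))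
    (hu : u ∈ B) (huv : u * v = 1) {y y' : B'} {j k n : ℕ}
    (hy : u ^ k * y ∈ B) (hy' : u ^ (k + j) * y' ∈ B) (hdvd : π ^ n ∣ y' - y) :
    ∃ b : B, y' - y = b * π ^ n * v ^ (k + j) := by
  have hmul : u ^ (k + j) * (y' - y) = u ^ (k + j) * y' - u ^ j * (u ^ k * y) := by ring
  have hmem : u ^ (k + j) * (y' - y) ∈ B := by
    rw [hmul]
    exact sub_mem hy' (mul_mem (pow_mem hu j) hy)
  obtain ⟨b, hb⟩ := hcap n _ hmem (dvd_mul_of_dvd_right hdvd _)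
  refine ⟨b, ?_⟩
  calc y' - y = v ^ (k + j) * (u ^ (k + j) * (y' - y)) := by
        rw [← mul_assoc, ← mul_pow, mul_comm v, huv, one_pow, one_mul]
    _ = b * π ^ n * v ^ (k + j) := by rw [hb]; ring

end Subring

theorem eq_sum_range_of_sub_eq {M : Type*} [AddCommGroup M] {y f : ℕ → M} (h₀ : y 1 = f 0)
    (hf : ∀ n, y (n + 2) - y (n + 1) = f (n + 1)) {n : ℕ} (hn : 1 ≤ n) :
    y n = ∑ m ∈ Finset.range n, f m := by
  obtain ⟨k, rfl⟩ := Nat.exists_eq_add_of_le' hn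
  rw [Finset.eq_sum_range_sub (fun i => y (i + 1)) k, Finset.sum_range_succ', h₀, add_comm]
  simp only [hf]

theorem stmt_6_general {B' : Type*} [CommRing B'] (B : Subring B')
    (p : ℕ) (u : B) (v : B') (huv : (u : B') * v = 1) (α : ℕ)
    (hcap : ∀ (m : ℕ) (x : B'), x ∈ B → (∃ z : B', x = (p : B') ^ m * z) →
      ∃ b : B, x = (p : B') ^ m * (b : B'))
    (x : ℕ → B) (y : ℕ → B')
    (hy : ∀ n, 1 ≤ n → (u : B') ^ (α * (n - 1)) * y n = (x n : B'))
    (hcong : ∀ n, 1 ≤ n → ∃ z : B', y (n + 1) - y n = (p : B') ^ n * z) :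
    ∃ b : ℕ → B, ∀ n, 1 ≤ n → ∃ z : B',
      y n - ∑ m ∈ Finset.range n, (b m : B') * (p : B') ^ m * v ^ (α * m) =
        (p : B') ^ n * z := by
  have hmem : ∀ n, (u : B') ^ (α * n) * y (n + 1) ∈ B := fun n => by
    simpa using (hy (n + 1) n.succ_pos).symm ▸ (x (n + 1)).2
  have hstep : ∀ n, ∃ c : B,
      y (n + 2) - y (n + 1) = c * (p : B') ^ (n + 1) * v ^ (α * n + α) :=
    fun n => Subring.exists_sub_eq_mul_pow_mul_pow hcap u.2 huv (hmem n)
      (by simpa [mul_add] using hmem (n + 1)) (hcong (n + 1) n.succ_pos)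
  choose c hc using hstep
  let b : ℕ → B := fun | 0 => x 1 | m + 1 => c m
  refine ⟨b, fun n hn => ⟨0, ?_⟩⟩
  have hsum : y n = ∑ m ∈ Finset.range n, (b m : B') * (p : B') ^ m * v ^ (α * m) :=
    eq_sum_range_of_sub_eq (by simpa using hy 1 le_rfl) (fun k => by simp [b, hc, mul_add]) hn
  rw [hsum, sub_self, mul_zero]

/-- Lemma 6.2: let `B ⊆ B'` with `u ∈ B` invertible in `B'` (inverse `v`),
`B'`(hence `B`) `p`-adically separated, and `p^m B' ∩ B = p^m B`.  If
`y n = x n / u^(α(n-1))` with `x n ∈ B` and `y (n+1) ≡ y n mod p^n`, then the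
`y n` converge to an element of `B[[p/u^α]]`: there are coefficients `b m ∈ B`
with `y n ≡ ∑_{m < n} b m (p/u^α)^m mod p^n` for all `n`. -/
theorem stmt_6 {B' : Type*} [CommRing B'] (B : Subring B')
    (p : ℕ) (u : B) (v : B') (huv : (u : B') * v = 1) (α : ℕ) (hα : 0 < α)
    (hsep : ∀ x : B', (∀ n : ℕ, ∃ z : B', x = (p : B') ^ n * z) → x = 0)
    (hcap : ∀ (m : ℕ) (x : B'), x ∈ B → (∃ z : B', x = (p : B') ^ m * z) →
      ∃ b : B, x = (p : B') ^ m * (b : B'))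
    (x : ℕ → B) (y : ℕ → B')
    (hy : ∀ n, 1 ≤ n → (u : B') ^ (α * (n - 1)) * y n = (x n : B'))
    (hcong : ∀ n, 1 ≤ n → ∃ z : B', y (n + 1) - y n = (p : B') ^ n * z) :
    ∃ b : ℕ → B, ∀ n, 1 ≤ n → ∃ z : B',
      y n - ∑ m ∈ Finset.range n, (b m : B') * (p : B') ^ m * v ^ (α * m) =
        (p : B') ^ n * z :=
  stmt_6_general B p u v huv α hcap x y hy hcong
end

section
/- Let $R$ be a perfect valuation ring of characteristic $p$ with fraction field $\mathrm{Fr}\,R$ and valuation $v_R$. For $r \in \mathbb{R}^{>0}$, define $W(\mathrm{Fr}\,R)^{\dagger,r} = \{x = \sum_{i=0}^{\infty} p^i [x_i] \in W(\mathrm{Fr}\,R) : i + r\, v_R(x_i) \to +\infty\}$, where $[\cdot]$ denotes the Teichmüller lift. Then $W(\mathrm{Fr}\,R)^{\dagger,r}$ is a subring of $W(\mathrm{Fr}\,R)$. -/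
/-!
Write `x = ∑ pⁱ [tᵢ]`. If `a ≠ 0` and `v(tⱼ) ≥ v(a)` for `j ≤ n`, then modulo `p^{n+1}` the vector
`x` equals `[a] · ∑ pⁱ [a⁻¹ tᵢ]`, and the second factor has coefficients in the valuation ring `O`.
Since `W(O)` is a subring of `W(K)` and `tⱼ([a] u) = a · tⱼ(u)`, the bound `v(tⱼ) ≥ γ` for `j ≤ n`
is preserved by sums (take `a` of minimal valuation). Expanding a product as `∑ p^{i+k} [tᵢ sₖ]`
gives `v(tₙ(xy)) ≥ min_{i+k ≤ n} (v(tᵢ) + v(sₖ))`. Both estimates propagate the growth condition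
`i + r v(tᵢ) → ∞`, and replacing `v` by `r v` reduces to `r = 1`.
-/

open Finset

structure IsRealValuation {K : Type*} [Field K] (v : K → ℝ) : Prop where
  map_mul : ∀ x y : K, x ≠ 0 → y ≠ 0 → v (x * y) = v x + v y
  min_le_map_add : ∀ x y : K, x ≠ 0 → y ≠ 0 → x + y ≠ 0 → min (v x) (v y) ≤ v (x + y)

namespace IsRealValuation

variable {K : Type*} [Field K] {v : K → ℝ} (hv : IsRealValuation v)
include hv

lemma const_mul {r : ℝ} (hr : 0 ≤ r) : IsRealValuation (fun c => r * v c) where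
  map_mul x y hx hy := by simp only [hv.map_mul x y hx hy, mul_add]
  min_le_map_add x y hx hy hxy := by
    rw [← mul_min_of_nonneg _ _ hr]
    exact mul_le_mul_of_nonneg_left (hv.min_le_map_add x y hx hy hxy) hr

lemma map_one : v 1 = 0 := by
  have h := hv.map_mul 1 1 one_ne_zero one_ne_zero
  rw [mul_one] at h
  linarith

lemma map_pow {c : K} (hc : c ≠ 0) (m : ℕ) : v (c ^ m) = m * v c := by
  induction m with
  | zero => simp [hv.map_one]
  | succ m ih =>
    rw [pow_succ, hv.map_mul _ _ (pow_ne_zero _ hc) hc, ih]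
    push_cast
    ring

lemma map_inv_mul {a c : K} (ha : a ≠ 0) (hc : c ≠ 0) : v (a⁻¹ * c) = v c - v a := by
  have h := hv.map_mul a (a⁻¹ * c) ha (mul_ne_zero (inv_ne_zero ha) hc)
  rw [mul_inv_cancel_left₀ ha] at h
  linarith

lemma map_neg (c : K) : v (-c) = v c := by
  rcases eq_or_ne c 0 with rfl | hc
  · rw [neg_zero]
  have h := hv.map_mul (-c) (-c) (neg_ne_zero.mpr hc) (neg_ne_zero.mpr hc)
  rw [neg_mul_neg, hv.map_mul c c hc hc] at h
  linarith

def integers : Subring K where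
  carrier := {c | c ≠ 0 → 0 ≤ v c}
  mul_mem' {a b} ha hb hab := by
    have ha0 := left_ne_zero_of_mul hab
    have hb0 := right_ne_zero_of_mul hab
    rw [hv.map_mul a b ha0 hb0]
    linarith [ha ha0, hb hb0]
  one_mem' _ := hv.map_one.ge
  add_mem' {a b} ha hb hab := by
    rcases eq_or_ne a 0 with rfl | ha0
    · simpa using hb (by simpa using hab)
    rcases eq_or_ne b 0 with rfl | hb0
    · simpa using ha (by simpa using hab)
    exact (le_min (ha ha0) (hb hb0)).trans (hv.min_le_map_add a b ha0 hb0 hab)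
  zero_mem' h := absurd rfl h
  neg_mem' {a} ha hna := by
    rw [hv.map_neg]
    exact ha (neg_ne_zero.mp hna)

end IsRealValuation

lemma add_le_of_add_natCeil_le {N n : ℕ} {c : ℝ} (h : N + ⌈c⌉₊ ≤ n) : (N : ℝ) + c ≤ n := by
  have h' : ((N + ⌈c⌉₊ : ℕ) : ℝ) ≤ n := by exact_mod_cast h
  push_cast at h'
  linarith [Nat.le_ceil c]

namespace WittVector

variable {p : ℕ} [hp : Fact p.Prime] {K : Type*} [Field K]

local notation "𝕎" => WittVector p

section Integers

variable {v : K → ℝ} (hv : IsRealValuation v)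

noncomputable def integers : Subring (𝕎 K) := (map hv.integers.subtype).range

lemma mem_integers_iff {u : 𝕎 K} : u ∈ integers hv ↔ ∀ i, u.coeff i ∈ hv.integers :=
  ⟨by rintro ⟨w, rfl⟩ i; exact (w.coeff i).2,
    fun h => ⟨mk p fun i => ⟨u.coeff i, h i⟩, ext fun i => by rw [map_coeff]; rfl⟩⟩

lemma teichmuller_mem_integers {c : K} (hc : c ∈ hv.integers) :
    teichmuller p c ∈ integers hv :=
  ⟨teichmuller p ⟨c, hc⟩, map_teichmuller _ _ _⟩

end Integers

variable [CharP K p] [PerfectRing K p]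

/-- The `i`-th coefficient of the Teichmüller expansion `x = ∑ pⁱ [tᵢ]`. -/
noncomputable def teichCoeff (x : 𝕎 K) (i : ℕ) : K :=
  (⇑(_root_.frobeniusEquiv K p).symm)^[i] (x.coeff i)

lemma teichCoeff_pow (x : 𝕎 K) (i : ℕ) : teichCoeff x i ^ p ^ i = x.coeff i :=
  iterate_frobeniusEquiv_symm_pow_p_pow K p _ i

lemma teichCoeff_eq_iff {x : 𝕎 K} {i : ℕ} {c : K} :
    teichCoeff x i = c ↔ x.coeff i = c ^ p ^ i := by
  rw [← teichCoeff_pow]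
  exact (iterateFrobeniusEquiv K p i).injective.eq_iff.symm

lemma teichCoeff_eq_zero_iff {x : 𝕎 K} {i : ℕ} : teichCoeff x i = 0 ↔ x.coeff i = 0 := by
  rw [teichCoeff_eq_iff, zero_pow (pow_ne_zero _ hp.out.ne_zero)]

lemma pow_dvd_iff_teichCoeff_eq_zero {x : 𝕎 K} {n : ℕ} :
    (p : 𝕎 K) ^ (n + 1) ∣ x ↔ ∀ j ≤ n, teichCoeff x j = 0 := by
  rw [← Ideal.mem_span_singleton, mem_span_p_pow_iff_le_coeff_eq_zero]
  simp only [teichCoeff_eq_zero_iff, Nat.lt_succ_iff]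

lemma teichCoeff_eq_of_dvd_sub {x y : 𝕎 K} {n j : ℕ} (h : (p : 𝕎 K) ^ (n + 1) ∣ x - y)
    (hj : j ≤ n) : teichCoeff x j = teichCoeff y j := by
  have h' := (mem_span_p_pow_iff_le_coeff_eq_zero _ _).mp (Ideal.mem_span_singleton.mpr h)
  rw [teichCoeff, teichCoeff,
    le_coeff_eq_iff_le_sub_coeff_eq_zero.mpr h' j (Nat.lt_succ_of_le hj)]

lemma teichCoeff_teichmuller_mul_pow (c : K) (e j : ℕ) :
    teichCoeff (teichmuller p c * (p : 𝕎 K) ^ e) j = if j = e then c else 0 := by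
  split_ifs with h
  · rw [h, teichCoeff_eq_iff, teichmuller_mul_pow_coeff]
  · rw [teichCoeff_eq_zero_iff, teichmuller_mul_pow_coeff_of_ne _ h]

lemma teichCoeff_sum_teichmuller_mul_pow (c : ℕ → K) {n j : ℕ} (hj : j ≤ n) :
    teichCoeff (∑ i ∈ Iic n, teichmuller p (c i) * (p : 𝕎 K) ^ i) j = c j := by
  have hsupp : ∀ i m, (teichmuller p (c i) * (p : 𝕎 K) ^ i).coeff m ≠ 0 → i = m := fun i _ h =>
    (not_imp_comm.mp (teichmuller_mul_pow_coeff_of_ne (c i)) h).symm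
  rw [teichCoeff_eq_iff, sum_coeff_eq_coeff_sum _ ?_, sum_eq_single j, teichmuller_mul_pow_coeff]
  · exact fun i _ hij => not_imp_comm.mp (hsupp i j) hij
  · exact fun h => absurd (mem_Iic.mpr hj) h
  · exact fun m => ⟨fun a b => Subtype.ext ((hsupp _ m a.2.2).trans (hsupp _ m b.2.2).symm)⟩

lemma pow_dvd_sub_sum_teichCoeff (x : 𝕎 K) (n : ℕ) :
    (p : 𝕎 K) ^ (n + 1) ∣ x - ∑ i ∈ Iic n, teichmuller p (teichCoeff x i) * (p : 𝕎 K) ^ i := by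
  simpa [teichCoeff] using dvd_sub_sum_teichmuller_iterateFrobeniusEquiv_coeff x n

lemma teichCoeff_teichmuller_mul (a : K) (x : 𝕎 K) (j : ℕ) :
    teichCoeff (teichmuller p a * x) j = a * teichCoeff x j := by
  have h : (p : 𝕎 K) ^ (j + 1) ∣ teichmuller p a * x -
      ∑ i ∈ Iic j, teichmuller p (a * teichCoeff x i) * (p : 𝕎 K) ^ i := by
    simpa only [mul_sub, mul_sum, ← mul_assoc, ← map_mul] using
      (pow_dvd_sub_sum_teichCoeff x j).mul_left (teichmuller p a)
  rw [teichCoeff_eq_of_dvd_sub h le_rfl, teichCoeff_sum_teichmuller_mul_pow _ le_rfl]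

section TeichBound

variable {v : K → ℝ}

variable (v) in
def teichBound (n : ℕ) (γ : ℝ) : Set (𝕎 K) :=
  {x | ∀ j ≤ n, teichCoeff x j ≠ 0 → γ ≤ v (teichCoeff x j)}

lemma teichBound_mono {n : ℕ} {γ γ' : ℝ} (h : γ' ≤ γ) :
    teichBound v n γ ⊆ teichBound (p := p) v n γ' :=
  fun _ hx j hj ht => h.trans (hx j hj ht)

lemma mem_teichBound_iff_of_dvd_sub {x y : 𝕎 K} {n : ℕ} {γ : ℝ}
    (h : (p : 𝕎 K) ^ (n + 1) ∣ x - y) : x ∈ teichBound v n γ ↔ y ∈ teichBound v n γ :=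
  forall₂_congr fun _ hj => by rw [teichCoeff_eq_of_dvd_sub h hj]

lemma mem_teichBound_of_dvd {x : 𝕎 K} {n : ℕ} {γ : ℝ} (h : (p : 𝕎 K) ^ (n + 1) ∣ x) :
    x ∈ teichBound v n γ :=
  fun j hj ht => absurd (pow_dvd_iff_teichCoeff_eq_zero.mp h j hj) ht

lemma teichmuller_mul_pow_mem_teichBound {c : K} {e n : ℕ} {γ : ℝ}
    (hc : e ≤ n → c ≠ 0 → γ ≤ v c) : teichmuller p c * (p : 𝕎 K) ^ e ∈ teichBound v n γ := by
  intro j hj ht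
  rw [teichCoeff_teichmuller_mul_pow] at ht ⊢
  split_ifs at ht ⊢ with hje
  · exact hc (hje ▸ hj) ht
  · exact absurd rfl ht

lemma pow_dvd_or_exists_teichBound (x : 𝕎 K) (n : ℕ) :
    (p : 𝕎 K) ^ (n + 1) ∣ x ∨
      ∃ j ≤ n, teichCoeff x j ≠ 0 ∧ x ∈ teichBound v n (v (teichCoeff x j)) := by
  classical
  rcases ((Iic n).filter (teichCoeff x · ≠ 0)).eq_empty_or_nonempty with hF | hF
  · refine Or.inl (pow_dvd_iff_teichCoeff_eq_zero.mpr fun j hj => ?_)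
    by_contra ht
    exact eq_empty_iff_forall_notMem.mp hF j (mem_filter.mpr ⟨mem_Iic.mpr hj, ht⟩)
  · obtain ⟨j, hjF, hmin⟩ := exists_min_image _ (fun j => v (teichCoeff x j)) hF
    rw [mem_filter, mem_Iic] at hjF
    exact Or.inr ⟨j, hjF.1, hjF.2, fun i hi ht => hmin i (mem_filter.mpr ⟨mem_Iic.mpr hi, ht⟩)⟩

variable (hv : IsRealValuation v)

lemma teichCoeff_mem_integers {u : 𝕎 K} (hu : u ∈ integers hv) (j : ℕ) :
    teichCoeff u j ∈ hv.integers := by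
  intro ht
  have hc := (mem_integers_iff hv).mp hu j (mt teichCoeff_eq_zero_iff.mpr ht)
  rw [← teichCoeff_pow, hv.map_pow ht] at hc
  exact nonneg_of_mul_nonneg_right hc (by exact_mod_cast pow_pos hp.out.pos j)

lemma teichmuller_mul_mem_teichBound {u : 𝕎 K} (hu : u ∈ integers hv) (a : K) (n : ℕ) :
    teichmuller p a * u ∈ teichBound v n (v a) := by
  intro j _ ht
  rw [teichCoeff_teichmuller_mul] at ht ⊢
  have ha := left_ne_zero_of_mul ht
  have hu' := right_ne_zero_of_mul ht
  rw [hv.map_mul _ _ ha hu']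
  linarith [teichCoeff_mem_integers hv hu j hu']

lemma exists_pow_dvd_sub_teichmuller_mul {x : 𝕎 K} {a : K} {n : ℕ} (ha : a ≠ 0)
    (hx : x ∈ teichBound v n (v a)) :
    ∃ u ∈ integers hv, (p : 𝕎 K) ^ (n + 1) ∣ x - teichmuller p a * u := by
  refine ⟨∑ i ∈ Iic n, teichmuller p (a⁻¹ * teichCoeff x i) * (p : 𝕎 K) ^ i,
    sum_mem fun i hi => mul_mem (teichmuller_mem_integers hv fun h => ?_)
      (pow_mem (natCast_mem _ p) i), ?_⟩
  · have ht := right_ne_zero_of_mul h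
    rw [hv.map_inv_mul ha ht]
    linarith [hx i (mem_Iic.mp hi) ht]
  · convert pow_dvd_sub_sum_teichCoeff x n using 2
    rw [mul_sum]
    refine sum_congr rfl fun i _ => ?_
    rw [← mul_assoc, ← map_mul, mul_inv_cancel_left₀ ha]

include hv

lemma sub_mem_teichBound_of_ne_zero {x y : 𝕎 K} {a : K} {n : ℕ} (ha : a ≠ 0)
    (hx : x ∈ teichBound v n (v a)) (hy : y ∈ teichBound v n (v a)) :
    x - y ∈ teichBound v n (v a) := by
  obtain ⟨u, hu, hxu⟩ := exists_pow_dvd_sub_teichmuller_mul hv ha hx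
  obtain ⟨w, hw, hyw⟩ := exists_pow_dvd_sub_teichmuller_mul hv ha hy
  refine (mem_teichBound_iff_of_dvd_sub ?_).mpr
    (teichmuller_mul_mem_teichBound hv (sub_mem hu hw) a n)
  simpa only [mul_sub, sub_sub_sub_comm] using dvd_sub hxu hyw

/-- Reduce to `sub_mem_teichBound_of_ne_zero` with `a` the coefficient of least valuation. -/
lemma sub_mem_teichBound {x y : 𝕎 K} {n : ℕ} {γ : ℝ}
    (hx : x ∈ teichBound v n γ) (hy : y ∈ teichBound v n γ) : x - y ∈ teichBound v n γ := by
  rcases pow_dvd_or_exists_teichBound x n with hx0 | ⟨i, hi, hxi, hxa⟩ <;>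
    rcases pow_dvd_or_exists_teichBound y n with hy0 | ⟨k, hk, hyk, hyb⟩
  · exact mem_teichBound_of_dvd (dvd_sub hx0 hy0)
  · exact teichBound_mono (hy k hk hyk)
      (sub_mem_teichBound_of_ne_zero hv hyk (mem_teichBound_of_dvd hx0) hyb)
  · exact teichBound_mono (hx i hi hxi)
      (sub_mem_teichBound_of_ne_zero hv hxi hxa (mem_teichBound_of_dvd hy0))
  · rcases le_total (v (teichCoeff x i)) (v (teichCoeff y k)) with h | h
    · exact teichBound_mono (hx i hi hxi)
        (sub_mem_teichBound_of_ne_zero hv hxi hxa (teichBound_mono h hyb))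
    · exact teichBound_mono (hy k hk hyk)
        (sub_mem_teichBound_of_ne_zero hv hyk (teichBound_mono h hxa) hyb)

noncomputable def teichBoundAddSubgroup (n : ℕ) (γ : ℝ) : AddSubgroup (𝕎 K) :=
  AddSubgroup.ofSub (teichBound v n γ) ⟨0, mem_teichBound_of_dvd (dvd_zero _)⟩
    fun _ hx _ hy => by simpa only [sub_eq_add_neg] using sub_mem_teichBound hv hx hy

lemma mem_teichBoundAddSubgroup {x : 𝕎 K} {n : ℕ} {γ : ℝ} :
    x ∈ teichBoundAddSubgroup hv n γ ↔ x ∈ teichBound v n γ := Iff.rfl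

lemma mul_mem_teichBound {x y : 𝕎 K} {n : ℕ} {γ : ℝ}
    (h : ∀ i k, i + k ≤ n → teichCoeff x i ≠ 0 → teichCoeff y k ≠ 0 →
      γ ≤ v (teichCoeff x i) + v (teichCoeff y k)) : x * y ∈ teichBound v n γ := by
  set X := ∑ i ∈ Iic n, teichmuller p (teichCoeff x i) * (p : 𝕎 K) ^ i
  set Y := ∑ k ∈ Iic n, teichmuller p (teichCoeff y k) * (p : 𝕎 K) ^ k
  have hXY : (p : 𝕎 K) ^ (n + 1) ∣ x * y - X * Y := by
    convert dvd_add ((pow_dvd_sub_sum_teichCoeff y n).mul_left x)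
      ((pow_dvd_sub_sum_teichCoeff x n).mul_right Y) using 1
    ring
  rw [mem_teichBound_iff_of_dvd_sub hXY, sum_mul_sum, ← mem_teichBoundAddSubgroup hv]
  refine sum_mem fun i _ => sum_mem fun k _ => ?_
  rw [mul_mul_mul_comm, ← map_mul, ← pow_add, mem_teichBoundAddSubgroup]
  refine teichmuller_mul_pow_mem_teichBound fun hik hc => ?_
  have hxi := left_ne_zero_of_mul hc
  have hyk := right_ne_zero_of_mul hc
  rw [hv.map_mul _ _ hxi hyk]
  exact h i k hik hxi hyk

end TeichBound

section Overconvergent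

variable {v : K → ℝ}

variable (v) in
def IsOverconvergent (x : 𝕎 K) : Prop :=
  ∀ C : ℝ, ∃ N : ℕ, ∀ i, N ≤ i → teichCoeff x i ≠ 0 → C ≤ i + v (teichCoeff x i)

lemma isOverconvergent_of_eventually_mem_teichBound {x : 𝕎 K}
    (h : ∀ C : ℝ, ∃ N : ℕ, ∀ n, N ≤ n → x ∈ teichBound v n (C - n)) : IsOverconvergent v x := by
  intro C
  obtain ⟨N, hN⟩ := h C
  exact ⟨N, fun i hi ht => by linarith [hN i hi i le_rfl ht]⟩

variable {x y : WittVector p K}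

lemma IsOverconvergent.exists_lowerBound (hx : IsOverconvergent v x) :
    ∃ B : ℝ, ∀ i, teichCoeff x i ≠ 0 → B ≤ i + v (teichCoeff x i) := by
  obtain ⟨N, hN⟩ := hx 0
  obtain ⟨B, hB⟩ := ((Set.finite_Iio N).image fun i : ℕ => (i : ℝ) + v (teichCoeff x i)).bddBelow
  refine ⟨min B 0, fun i ht => ?_⟩
  rcases lt_or_ge i N with hi | hi
  · exact (min_le_left _ _).trans (hB ⟨i, hi, rfl⟩)
  · exact (min_le_right _ _).trans (hN i hi ht)

lemma IsOverconvergent.eventually_mem_teichBound (hx : IsOverconvergent v x) (C : ℝ) :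
    ∃ N : ℕ, ∀ n, N ≤ n → x ∈ teichBound v n (C - n) := by
  obtain ⟨B, hB⟩ := hx.exists_lowerBound
  obtain ⟨N, hN⟩ := hx C
  refine ⟨N + ⌈C - B⌉₊, fun n hn j hj ht => ?_⟩
  have hn' := add_le_of_add_natCeil_le hn
  have hj' : (j : ℝ) ≤ n := by exact_mod_cast hj
  rcases le_or_gt N j with hNj | hNj
  · linarith [hN j hNj ht]
  · have hNj' : (j : ℝ) < N := by exact_mod_cast hNj
    linarith [hB j ht]

lemma isOverconvergent_zero : IsOverconvergent v (0 : 𝕎 K) :=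
  fun _ => ⟨0, fun i _ ht => absurd (teichCoeff_eq_zero_iff.mpr (zero_coeff p K i)) ht⟩

lemma isOverconvergent_one : IsOverconvergent v (1 : 𝕎 K) :=
  fun _ => ⟨1, fun i hi ht => absurd (teichCoeff_eq_zero_iff.mpr (one_coeff_eq_of_pos p K i hi)) ht⟩

variable (hv : IsRealValuation v)
include hv

lemma IsOverconvergent.sub (hx : IsOverconvergent v x) (hy : IsOverconvergent v y) :
    IsOverconvergent v (x - y) := by
  refine isOverconvergent_of_eventually_mem_teichBound fun C => ?_
  obtain ⟨Nx, hNx⟩ := hx.eventually_mem_teichBound C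
  obtain ⟨Ny, hNy⟩ := hy.eventually_mem_teichBound C
  exact ⟨max Nx Ny, fun n hn =>
    sub_mem_teichBound hv (hNx n (le_of_max_le_left hn)) (hNy n (le_of_max_le_right hn))⟩

/-- The global lower bounds `B` handle the finitely many small indices, the tails the rest. -/
lemma IsOverconvergent.mul (hx : IsOverconvergent v x) (hy : IsOverconvergent v y) :
    IsOverconvergent v (x * y) := by
  obtain ⟨Bx, hBx⟩ := hx.exists_lowerBound
  obtain ⟨By, hBy⟩ := hy.exists_lowerBound
  refine isOverconvergent_of_eventually_mem_teichBound fun C => ?_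
  obtain ⟨Nx, hNx⟩ := hx (C - By)
  obtain ⟨Ny, hNy⟩ := hy (C - Bx)
  refine ⟨Nx + Ny + ⌈C - Bx - By⌉₊, fun n hn => mul_mem_teichBound hv fun i k hik hxi hyk => ?_⟩
  have hn' := add_le_of_add_natCeil_le hn
  have hik' : (i + k : ℝ) ≤ n := by exact_mod_cast hik
  have hxi' := hBx i hxi
  have hyk' := hBy k hyk
  rcases le_or_gt Nx i with hi | hi
  · linarith [hNx i hi hxi]
  rcases le_or_gt Ny k with hk | hk
  · linarith [hNy k hk hyk]
  have hi' : (i : ℝ) < Nx := by exact_mod_cast hi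
  have hk' : (k : ℝ) < Ny := by exact_mod_cast hk
  push_cast at hn'
  linarith

/-- The ring `W(K)^{†,1}` of overconvergent Witt vectors of radius `1`. -/
noncomputable def overconvergentSubring : Subring (𝕎 K) where
  carrier := {x | IsOverconvergent v x}
  zero_mem' := isOverconvergent_zero
  one_mem' := isOverconvergent_one
  neg_mem' {x} hx := by
    simpa only [Set.mem_ofPred_eq, zero_sub] using isOverconvergent_zero.sub hv hx
  add_mem' {x y} hx hy := by
    have hy' : IsOverconvergent v (-y) := by
      simpa only [zero_sub] using isOverconvergent_zero.sub hv hy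
    simpa only [Set.mem_ofPred_eq, sub_neg_eq_add] using hx.sub hv hy'
  mul_mem' hx hy := hx.mul hv hy

end Overconvergent

end WittVector

/-- For a perfect field `K` of characteristic `p` (e.g. `Fr R`) with a rank-1
valuation `v` (given on nonzero elements), and `r > 0`, the set of Witt vectors
`x = ∑ pⁱ [tᵢ]` (with Teichmüller coefficients `tᵢ = (x.coeff i)^(1/pⁱ)`)
satisfying `i + r·v(tᵢ) → ∞` is a subring `W(Fr R)^{†,r}` of `W(Fr R)`. -/
theorem stmt_12 (p : ℕ) [Fact p.Prime] {K : Type*} [Field K]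
    [ExpChar K p] [PerfectRing K p]
    (v : K → ℝ)
    (hvmul : ∀ x y : K, x ≠ 0 → y ≠ 0 → v (x * y) = v x + v y)
    (hvadd : ∀ x y : K, x ≠ 0 → y ≠ 0 → x + y ≠ 0 → min (v x) (v y) ≤ v (x + y))
    (r : ℝ) (hr : 0 < r) :
    ∃ S : Subring (WittVector p K),
      (S : Set (WittVector p K)) =
        {x : WittVector p K | ∀ C : ℝ, ∃ N : ℕ, ∀ i, N ≤ i →
          (⇑(frobeniusEquiv K p).symm)^[i] (x.coeff i) = 0 ∨
          C ≤ (i : ℝ) + r * v ((⇑(frobeniusEquiv K p).symm)^[i] (x.coeff i))} := by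
  have : CharP K p := by
    cases ‹ExpChar K p› with
    | zero => exact absurd Fact.out Nat.not_prime_one
    | prime => assumption
  have hv : IsRealValuation (fun c => r * v c) := IsRealValuation.const_mul ⟨hvmul, hvadd⟩ hr.le
  refine ⟨WittVector.overconvergentSubring hv, Set.ext fun x => ?_⟩
  exact forall_congr' fun _ => exists_congr fun _ => forall₂_congr fun _ _ =>
    or_iff_not_imp_left.symm
end

section
/- Let $A = W(k)[[u]]$, so that $A/pA = k[[u]]$, and let $\bar{\Lambda} \in M_d(A/pA)$ be a matrix such that $u^h \bar{\Lambda}^{-1} \in M_d(k[[u]])$, i.e., $\bar\Lambda$ is invertible over $k((u))$ with $u^h\bar\Lambda^{-1}$ integral. Then there exists a lift $\Lambda \in M_d(W(k)[[u]])$ of $\bar{\Lambda}$ such that $u^h \Lambda^{-1} \in M_d(W(k)[[u]])$. -/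
open Matrix

/-- Lift a unit matrix along a surjection of rings with unit lifting. -/
lemma lift_unit_matrix' {A R : Type*} [CommRing A] [CommRing R]
    (π : A →+* R) (hπ : Function.Surjective π)
    (hunit : ∀ a : A, IsUnit (π a) → IsUnit a) {d : ℕ}
    (Xb : Matrix (Fin d) (Fin d) R) (hX : IsUnit Xb) :
    ∃ X Xi : Matrix (Fin d) (Fin d) A,
      X.map π = Xb ∧ X * Xi = 1 ∧ Xi * X = 1 := by
  choose f hf using hπ
  set X : Matrix (Fin d) (Fin d) A := Matrix.of fun i j => f (Xb i j) with hXdef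
  have hmap : X.map π = Xb := by ext i j; simp [X, hf]
  have hdet : IsUnit X.det := by
    apply hunit
    rw [RingHom.map_det, RingHom.mapMatrix_apply, hmap]
    exact (Matrix.isUnit_iff_isUnit_det Xb).mp hX
  obtain ⟨U, hU⟩ := (Matrix.isUnit_iff_isUnit_det X).mpr hdet
  exact ⟨X, ↑U⁻¹, hmap, by rw [← hU]; exact U.mul_inv, by rw [← hU]; exact U.inv_mul⟩

/-- Smith-normal-form factorization over `k[[u]]` for a matrix with a scalar
multiple of the identity as two-sided product. -/
lemma snf_factor {k : Type*} [Field k] {d h : ℕ}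
    (Λbar Λbarinv : Matrix (Fin d) (Fin d) (PowerSeries k))
    (h2 : Λbarinv * Λbar =
      (PowerSeries.X ^ h : PowerSeries k) • (1 : Matrix (Fin d) (Fin d) (PowerSeries k))) :
    ∃ (a : Fin d → PowerSeries k) (U V : Matrix (Fin d) (Fin d) (PowerSeries k)),
      IsUnit U ∧ IsUnit V ∧ Λbar = U * Matrix.diagonal a * V := by
  classical
  set T : (Fin d → PowerSeries k) →ₗ[PowerSeries k] (Fin d → PowerSeries k) :=
    Λbar.mulVecLin with hTdef
  have hinj : Function.Injective T := by
    intro x y hxy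
    have hx : Λbar.mulVec x = Λbar.mulVec y := hxy
    have h3 : (Λbarinv * Λbar).mulVec x = (Λbarinv * Λbar).mulVec y := by
      rw [← Matrix.mulVec_mulVec, ← Matrix.mulVec_mulVec, hx]
    rw [h2] at h3
    have h4 : (PowerSeries.X ^ h : PowerSeries k) • x
        = (PowerSeries.X ^ h : PowerSeries k) • y := by
      simpa [Matrix.smul_mulVec, Matrix.one_mulVec] using h3
    funext i
    have := congrFun h4 i
    simp only [Pi.smul_apply, smul_eq_mul] at this
    exact mul_left_cancel₀ (pow_ne_zero _ PowerSeries.X_ne_zero) this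
  set N : Submodule (PowerSeries k) (Fin d → PowerSeries k) := LinearMap.range T with hNdef
  obtain ⟨n, bM, bN, f, a, ha⟩ :=
    Submodule.smithNormalForm (Pi.basisFun (PowerSeries k) (Fin d)) N
  set eN : (Fin d → PowerSeries k) ≃ₗ[PowerSeries k] N :=
    LinearEquiv.ofInjective T hinj with heN
  have hnd : n = d := by
    simpa using
      (Fintype.card_congr ((bN.map eN.symm).indexEquiv (Pi.basisFun (PowerSeries k) (Fin d))))
  subst hnd
  set σ : Equiv.Perm (Fin n) :=
    Equiv.ofBijective f (Finite.injective_iff_bijective.mp f.injective) with hσ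
  set cB : Module.Basis (Fin n) (PowerSeries k) (Fin n → PowerSeries k) := bN.map eN.symm with hcB
  have hT : ∀ j, T (cB j) = a j • bM (f j) := by
    intro j
    have h5 : eN (cB j) = bN j := by
      simp [cB, Module.Basis.map_apply]
    have h6 : ((eN (cB j) : Fin n → PowerSeries k)) = T (cB j) :=
      LinearEquiv.ofInjective_apply T (cB j)
    rw [h5] at h6
    rw [← h6, ha j]
  set D : Matrix (Fin n) (Fin n) (PowerSeries k) := LinearMap.toMatrix cB bM T with hDdef
  have hD : D = (Matrix.diagonal a).submatrix σ.symm id := by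
    ext i j
    rw [hDdef, LinearMap.toMatrix_apply, hT j, _root_.map_smul, Module.Basis.repr_self]
    simp only [Finsupp.smul_single, smul_eq_mul, mul_one, Matrix.submatrix_apply,
      Matrix.diagonal_apply, id, Finsupp.single_apply]
    have hiff : (f j = i) ↔ (σ.symm i = j) := by
      constructor
      · rintro rfl
        exact σ.symm_apply_apply j
      · rintro rfl
        exact σ.apply_symm_apply i
    by_cases hc : f j = i
    · rw [if_pos hc, if_pos (hiff.mp hc)]
      rw [hiff.mp hc]
    · rw [if_neg hc, if_neg (fun hcc => hc (hiff.mpr hcc))]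
  have hDfac : D = (Equiv.Perm.permMatrix (PowerSeries k) σ.symm) * Matrix.diagonal a := by
    rw [hD, ← PEquiv.toMatrix_toPEquiv_mul]
  have hPunit : IsUnit (Equiv.Perm.permMatrix (PowerSeries k) σ.symm) := by
    rw [Matrix.isUnit_iff_isUnit_det, Matrix.det_permutation]
    rcases Int.units_eq_one_or (Equiv.Perm.sign σ.symm) with hs | hs <;> rw [hs] <;> simp
  have hone : LinearMap.toMatrix (Pi.basisFun (PowerSeries k) (Fin n))
      (Pi.basisFun (PowerSeries k) (Fin n)) T = Λbar := by
    rw [LinearMap.toMatrix_eq_toMatrix', hTdef, ← Matrix.toLin'_apply' Λbar,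
      LinearMap.toMatrix'_toLin']
  have hfac : (Pi.basisFun (PowerSeries k) (Fin n)).toMatrix bM * D
      * cB.toMatrix (Pi.basisFun (PowerSeries k) (Fin n)) = Λbar := by
    rw [hDdef, basis_toMatrix_mul_linearMap_toMatrix_mul_basis_toMatrix, hone]
  refine ⟨a, (Pi.basisFun (PowerSeries k) (Fin n)).toMatrix bM
      * Equiv.Perm.permMatrix (PowerSeries k) σ.symm,
    cB.toMatrix (Pi.basisFun (PowerSeries k) (Fin n)), ?_, ?_, ?_⟩
  · refine IsUnit.mul ?_ hPunit
    exact ⟨⟨_, _, Module.Basis.toMatrix_mul_toMatrix_flip _ _, Module.Basis.toMatrix_mul_toMatrix_flip _ _⟩, rfl⟩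
  · exact ⟨⟨_, _, Module.Basis.toMatrix_mul_toMatrix_flip _ _, Module.Basis.toMatrix_mul_toMatrix_flip _ _⟩, rfl⟩
  · rw [← hfac, hDfac, ← mul_assoc]

/-- The Smith-normal-form lifting step of Lemma 5.3: given a surjection
`π : A → k[[u]]` along which units lift, `uA ∈ A` lifting `X`, and a matrix
`Λ̄` over `k[[u]]` with `u^h Λ̄⁻¹` integral (encoded by a two-sided
`X^h`-inverse), there is a lift `Λ` over `A` of `Λ̄` with `uA^h Λ⁻¹` integral. -/
theorem stmt_16 {A : Type*} [CommRing A] {k : Type*} [Field k]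
    (π : A →+* PowerSeries k) (hπ : Function.Surjective π)
    (hunit : ∀ a : A, IsUnit (π a) → IsUnit a)
    (uA : A) (hu : π uA = PowerSeries.X)
    (d h : ℕ)
    (Λbar Λbarinv : Matrix (Fin d) (Fin d) (PowerSeries k))
    (h1 : Λbar * Λbarinv =
      (PowerSeries.X ^ h : PowerSeries k) • (1 : Matrix (Fin d) (Fin d) (PowerSeries k)))
    (h2 : Λbarinv * Λbar =
      (PowerSeries.X ^ h : PowerSeries k) • (1 : Matrix (Fin d) (Fin d) (PowerSeries k))) :
    ∃ Λ Λinv : Matrix (Fin d) (Fin d) A,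
      Λ.map π = Λbar ∧
      Λ * Λinv = (uA ^ h) • (1 : Matrix (Fin d) (Fin d) A) ∧
      Λinv * Λ = (uA ^ h) • (1 : Matrix (Fin d) (Fin d) A) := by
  classical
  obtain ⟨a, U, V, hU, hV, hfac⟩ := snf_factor Λbar Λbarinv h2
  obtain ⟨Xu, hXu⟩ := hU
  obtain ⟨Vu, hVu⟩ := hV
  have key : Matrix.diagonal a * (Vu.val * (Λbarinv * Xu.val))
      = (PowerSeries.X ^ h : PowerSeries k) • (1 : Matrix (Fin d) (Fin d) (PowerSeries k)) := by
    have h1' : Xu⁻¹.val * (Λbar * Λbarinv) * Xu.val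
        = Xu⁻¹.val
          * ((PowerSeries.X ^ h : PowerSeries k) • 1) * Xu.val := by rw [h1]
    rw [hfac, ← hXu, ← hVu] at h1'
    simpa only [mul_assoc, Units.inv_mul_cancel_left, mul_smul_comm, smul_mul_assoc,
      one_mul, mul_one, Units.inv_mul] using h1'
  have hdvd : ∀ i : Fin d, ∃ aa bb : A, π aa = a i ∧ aa * bb = uA ^ h := by
    intro i
    have hAi : a i * (Vu.val * (Λbarinv * Xu.val)) i i = PowerSeries.X ^ h := by
      have hkey := congrArg (fun M : Matrix (Fin d) (Fin d) (PowerSeries k) => M i i) key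
      simpa [Matrix.diagonal_mul, Matrix.smul_apply, Matrix.one_apply_eq] using hkey
    obtain ⟨m, hm, hassoc⟩ :=
      (dvd_prime_pow PowerSeries.X_prime h).mp ⟨_, hAi.symm⟩
    obtain ⟨ε, hε⟩ := hassoc
    obtain ⟨e, he⟩ := hπ (↑ε⁻¹ : PowerSeries k)
    have heu : IsUnit e := hunit e (by rw [he]; exact (ε⁻¹).isUnit)
    obtain ⟨E, hE⟩ := heu
    refine ⟨uA ^ m * e, uA ^ (h - m) * ↑E⁻¹, ?_, ?_⟩
    · rw [_root_.map_mul, map_pow, hu, he, Units.mul_inv_eq_iff_eq_mul]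
      exact hε.symm
    · have hmm : m + (h - m) = h := Nat.add_sub_cancel' hm
      calc uA ^ m * e * (uA ^ (h - m) * ↑E⁻¹)
          = uA ^ m * uA ^ (h - m) * (e * ↑E⁻¹) := by ring
        _ = uA ^ h * (↑E * ↑E⁻¹) := by rw [← pow_add, hmm, hE]
        _ = uA ^ h := by rw [E.mul_inv, mul_one]
  choose aa bb hpa hab using hdvd
  obtain ⟨XA, Xi, hXmap, hXXi, hXiX⟩ := lift_unit_matrix' π hπ hunit U ⟨Xu, hXu⟩
  obtain ⟨YA, Yi, hYmap, hYYi, hYiY⟩ := lift_unit_matrix' π hπ hunit V ⟨Vu, hVu⟩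
  have hDD : Matrix.diagonal aa * Matrix.diagonal bb
      = (uA ^ h) • (1 : Matrix (Fin d) (Fin d) A) := by
    rw [Matrix.diagonal_mul_diagonal, Matrix.smul_one_eq_diagonal]
    exact congrArg Matrix.diagonal (funext hab)
  have hDD' : Matrix.diagonal bb * Matrix.diagonal aa
      = (uA ^ h) • (1 : Matrix (Fin d) (Fin d) A) := by
    rw [Matrix.diagonal_mul_diagonal, Matrix.smul_one_eq_diagonal]
    exact congrArg Matrix.diagonal (funext fun i => by rw [mul_comm]; exact hab i)
  refine ⟨XA * Matrix.diagonal aa * YA, Yi * Matrix.diagonal bb * Xi, ?_, ?_, ?_⟩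
  · rw [Matrix.map_mul, Matrix.map_mul, hXmap, hYmap,
      Matrix.diagonal_map (map_zero π), hfac]
    rw [show (fun m => π (aa m)) = a from funext hpa]
  · calc XA * Matrix.diagonal aa * YA * (Yi * Matrix.diagonal bb * Xi)
        = XA * Matrix.diagonal aa * (YA * Yi) * (Matrix.diagonal bb * Xi) := by
          simp only [mul_assoc]
      _ = XA * Matrix.diagonal aa * (Matrix.diagonal bb * Xi) := by rw [hYYi, mul_one]
      _ = XA * (Matrix.diagonal aa * Matrix.diagonal bb) * Xi := by simp only [mul_assoc]
      _ = XA * ((uA ^ h) • 1) * Xi := by rw [hDD]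
      _ = (uA ^ h) • (XA * Xi) := by rw [mul_smul_comm, smul_mul_assoc, mul_one]
      _ = (uA ^ h) • 1 := by rw [hXXi]
  · calc Yi * Matrix.diagonal bb * Xi * (XA * Matrix.diagonal aa * YA)
        = Yi * Matrix.diagonal bb * (Xi * XA) * (Matrix.diagonal aa * YA) := by
          simp only [mul_assoc]
      _ = Yi * Matrix.diagonal bb * (Matrix.diagonal aa * YA) := by rw [hXiX, mul_one]
      _ = Yi * (Matrix.diagonal bb * Matrix.diagonal aa) * YA := by simp only [mul_assoc]
      _ = Yi * ((uA ^ h) • 1) * YA := by rw [hDD']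
      _ = (uA ^ h) • (Yi * YA) := by rw [mul_smul_comm, smul_mul_assoc, mul_one]
      _ = (uA ^ h) • 1 := by rw [hYiY]
end
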